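/- arXiv:2408.16576 — 2 statements merged into one kernel-verified Lean document; each statement's English description precedes it below -/
import Mathlib

section
/- Let $v \geq 1$, set $K = \lfloor \log v / \log 2 \rfloor$, and define $\mathcal{C}_v(K) = \max_{w \leq v} \max \{ \binom{v}{w} \prod_{k=0}^{K} \binom{v}{a_k} : a_0, \ldots, a_K \geq 0,\ w + a_0 + \cdots + a_K \leq v,\ a_j \leq v 2^{-j} \text{ for all } j \}$. Then $\mathcal{C}_v(K) \leq (16\sqrt{2e})^v$. -/
open Finset Real

/-!
Bound `choose v w` and the factors with `j < 2` by `2 ^ v`. For `j ≥ 2`, with `t = v / 2 ^ j`,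
`choose v a ≤ v ^ a / a! = (2 ^ j) ^ a * t ^ a / a! ≤ 2 ^ (j t) * e ^ t`, and since
`∑_{j ≥ 2} j / 2 ^ j = 3 / 2` and `∑_{j ≥ 2} 1 / 2 ^ j = 1 / 2` these factors contribute at most
`2 ^ (3v/2) * e ^ (v/2)`. Altogether `2 ^ (3v) * 2 ^ (3v/2) * e ^ (v/2) = (16 √(2e)) ^ v`.
-/

theorem choose_le_exp_of_le_div_two_pow (n j k : ℕ) (h : (k : ℝ) ≤ n / 2 ^ j) :
    (n.choose k : ℝ) ≤ exp (n / 2 ^ j * (j * log 2 + 1)) := by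
  set t : ℝ := n / 2 ^ j
  have ht : 0 ≤ t := by positivity
  have hn : (n : ℝ) = 2 ^ j * t := by simp only [t]; field_simp
  have two_pow_pow : ((2 : ℝ) ^ j) ^ k = exp (k * (j * log 2)) := by
    rw [exp_nat_mul, exp_nat_mul, exp_log two_pos]
  calc (n.choose k : ℝ) ≤ n ^ k / k.factorial := Nat.choose_le_pow_div k n
    _ = (2 ^ j) ^ k * (t ^ k / k.factorial) := by rw [hn, mul_pow, mul_div_assoc]
    _ ≤ exp (t * (j * log 2)) * exp t := by
      gcongr
      · rw [two_pow_pow]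
        gcongr
      · exact pow_div_factorial_le_exp t ht k
    _ = exp (t * (j * log 2 + 1)) := by rw [← exp_add, mul_add_one]

theorem sum_range_coe_mul_half_pow_le (N : ℕ) : ∑ i ∈ range N, (i : ℝ) * (1 / 2) ^ i ≤ 2 := by
  have hr : ‖(1 / 2 : ℝ)‖ < 1 := by norm_num
  calc ∑ i ∈ range N, (i : ℝ) * (1 / 2) ^ i ≤ ∑' i : ℕ, (i : ℝ) * (1 / 2) ^ i :=
        Summable.sum_le_tsum _ (fun i _ => by positivity)
          (by simpa using summable_pow_mul_geometric_of_norm_lt_one 1 hr)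
    _ = 2 := by rw [tsum_coe_mul_geometric_of_norm_lt_one hr]; norm_num

/-- For `j < 2` the trivial bound `choose n k ≤ 2 ^ n` beats `choose_le_exp_of_le_div_two_pow`. -/
noncomputable def binomRate (j : ℕ) : ℝ := if j < 2 then log 2 else (j * log 2 + 1) / 2 ^ j

theorem binomRate_nonneg (j : ℕ) : 0 ≤ binomRate j := by
  unfold binomRate
  split_ifs <;> positivity

theorem choose_le_exp_mul_binomRate (n j k : ℕ) (h : (k : ℝ) ≤ n / 2 ^ j) :
    (n.choose k : ℝ) ≤ exp (n * binomRate j) := by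
  unfold binomRate
  split_ifs
  · rw [exp_nat_mul, exp_log two_pos]
    exact_mod_cast Nat.choose_le_two_pow n k
  · convert choose_le_exp_of_le_div_two_pow n j k h using 2
    ring

theorem sum_range_binomRate_add_two_le (N : ℕ) :
    ∑ i ∈ range N, binomRate (i + 2) ≤ (3 * log 2 + 1) / 2 := by
  have hterm : ∀ i : ℕ, binomRate (i + 2)
      = (log 2 * ((i : ℝ) * (1 / 2) ^ i) + (2 * log 2 + 1) * (1 / 2) ^ i) / 4 := by
    intro i
    simp only [binomRate, show ¬ i + 2 < 2 by omega, if_false]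
    rw [one_div_pow]
    push_cast
    field_simp
    ring
  have hlog : 0 ≤ log 2 := log_nonneg one_le_two
  simp only [hterm, ← sum_div, sum_add_distrib, ← mul_sum]
  have h1 := mul_le_mul_of_nonneg_left (sum_range_coe_mul_half_pow_le N) hlog
  have h2 := mul_le_mul_of_nonneg_left (sum_geometric_two_le N) (by positivity : 0 ≤ 2 * log 2 + 1)
  rw [div_le_div_iff₀ (by norm_num) (by norm_num)]
  linarith

theorem sum_binomRate_le (s : Finset ℕ) : ∑ j ∈ s, binomRate j ≤ (7 * log 2 + 1) / 2 := by
  obtain ⟨N, hN⟩ := s.exists_nat_subset_range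
  have hsub : s ⊆ range (N + 2) := hN.trans (range_subset_range.2 (by omega))
  calc ∑ j ∈ s, binomRate j ≤ ∑ j ∈ range (N + 2), binomRate j :=
        sum_le_sum_of_subset_of_nonneg hsub fun j _ _ => binomRate_nonneg j
    _ = ∑ i ∈ range N, binomRate (i + 2) + 2 * log 2 := by
      rw [sum_range_succ', sum_range_succ', binomRate, binomRate, if_pos (by norm_num),
        if_pos (by norm_num)]
      ring
    _ ≤ (7 * log 2 + 1) / 2 := by linarith [sum_range_binomRate_add_two_le N]

theorem prod_choose_le_exp (n : ℕ) (s : Finset ℕ) (a : ℕ → ℕ)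
    (ha : ∀ j ∈ s, (a j : ℝ) ≤ n / 2 ^ j) :
    ∏ j ∈ s, (n.choose (a j) : ℝ) ≤ exp (n * ((7 * log 2 + 1) / 2)) :=
  calc ∏ j ∈ s, (n.choose (a j) : ℝ) ≤ ∏ j ∈ s, exp (n * binomRate j) :=
        prod_le_prod (fun _ _ => by positivity)
          fun j hj => choose_le_exp_mul_binomRate n j (a j) (ha j hj)
    _ = exp (n * ∑ j ∈ s, binomRate j) := by rw [← exp_sum, mul_sum]
    _ ≤ exp (n * ((7 * log 2 + 1) / 2)) := by gcongr; exact sum_binomRate_le s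

theorem log_sixteen_mul_sqrt_two_mul_exp_one :
    log (16 * √(2 * exp 1)) = (9 * log 2 + 1) / 2 := by
  rw [log_mul (by norm_num) (by positivity), log_sqrt (by positivity),
    log_mul two_ne_zero (exp_ne_zero 1), log_exp, show (16 : ℝ) = 2 ^ 4 by norm_num, log_pow]
  push_cast
  ring

theorem stmt_0_general (v : ℕ) (K : ℕ)
    (w : ℕ) (a : ℕ → ℕ)
    (ha : ∀ j ≤ K, (a j : ℝ) ≤ (v : ℝ) / 2 ^ j) :
    ((Nat.choose v w * ∏ j ∈ Finset.range (K + 1), Nat.choose v (a j) : ℕ) : ℝ)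
      ≤ (16 * Real.sqrt (2 * Real.exp 1)) ^ v := by
  have hw : (v.choose w : ℝ) ≤ exp (v * log 2) := by
    rw [exp_nat_mul, exp_log two_pos]
    exact_mod_cast Nat.choose_le_two_pow v w
  have hprod := prod_choose_le_exp v (range (K + 1)) a fun j hj =>
    ha j (Nat.lt_succ_iff.1 (mem_range.1 hj))
  push_cast
  calc (v.choose w : ℝ) * ∏ j ∈ range (K + 1), (v.choose (a j) : ℝ)
      ≤ exp (v * log 2) * exp (v * ((7 * log 2 + 1) / 2)) := by gcongr
    _ = (16 * √(2 * exp 1)) ^ v := by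
      rw [← exp_add, ← exp_log (by positivity : (0 : ℝ) < 16 * √(2 * exp 1)), ← exp_nat_mul,
        log_sixteen_mul_sqrt_two_mul_exp_one]
      ring_nf

/-- Lemma `combilemma`: for `v ≥ 1` and `K = ⌊log v / log 2⌋`, every admissible
choice of `w` and `a₀,…,a_K` satisfies
`C(v,w) ∏_k C(v,a_k) ≤ (16 √(2e))^v`, i.e. the maximum `𝒞_v(K)` is at most `(16√(2e))^v`. -/
theorem stmt_0 (v : ℕ) (hv : 1 ≤ v) (K : ℕ) (hK : K = ⌊Real.log v / Real.log 2⌋₊)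
    (w : ℕ) (hw : w ≤ v) (a : ℕ → ℕ)
    (hsum : w + ∑ j ∈ Finset.range (K + 1), a j ≤ v)
    (ha : ∀ j ≤ K, (a j : ℝ) ≤ (v : ℝ) / 2 ^ j) :
    ((Nat.choose v w * ∏ j ∈ Finset.range (K + 1), Nat.choose v (a j) : ℕ) : ℝ)
      ≤ (16 * Real.sqrt (2 * Real.exp 1)) ^ v :=
  stmt_0_general v K w a ha
end

section
/- There exists an absolute constant $B > 0$ such that for all integers $k \geq 2$, $\sum_{m \geq 1} \tau_k(m^2)/m^2 \leq (\log(Bk))^{11k}$, where $\tau_k$ is the $k$-fold divisor function. -/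
/-- The `k`-fold divisor function: the number of ordered `k`-tuples of positive
integers with product `n`. -/
noncomputable def tauk (k n : ℕ) : ℕ :=
  Nat.card {f : Fin k → ℕ // (∀ i, 0 < f i) ∧ ∏ i, f i = n}

/-!
The weight `m ↦ τ_k(m²)/m²` is multiplicative, so every partial sum of the series is bounded by
an Euler product `∏_{p<N} ∑_e τ_k(p^{2e}) p^{-2e}`. Since `τ_k(p^b) = C(b+k-1, b)`, the local
factor at `p` is at most `∑_b τ_k(p^b) p^{-b} = (1 - 1/p)^{-k} ≤ exp(2k/p)`, which is the right
bound for `p < 2k`; Chebyshev's bound `θ(x) ≤ x log 4`, applied on dyadic blocks, gives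
`∑_{p<2k} 1/p ≤ 4 log log 2k + 8`. For `p ≥ 2k` the estimate `τ_k(p^b) ≤ k^b` bounds the local
factor by `(1 - k²/p²)^{-1} ≤ exp(2k²/p²)`, and these factors contribute at most `exp(2k)`.
Hence the series is at most `exp(8k log log 2k + 18k) ≤ (log Bk)^{11k}` with `B = exp(exp 6)`.
-/

open Finset Real

theorem tauk_eq_card_finMulAntidiag (k n : ℕ) : tauk k n = #(Nat.finMulAntidiag k n) := by
  rw [tauk, ← Nat.card_eq_finsetCard]
  refine Nat.card_congr (Equiv.subtypeEquivRight fun f => ?_)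
  simp only [Nat.mem_finMulAntidiag, pos_iff_ne_zero]
  constructor
  · rintro ⟨hpos, rfl⟩
    exact ⟨rfl, prod_ne_zero_iff.mpr fun i _ => hpos i⟩
  · rintro ⟨rfl, hn⟩
    exact ⟨fun i => prod_ne_zero_iff.mp hn i (mem_univ i), rfl⟩

theorem tauk_zero (n : ℕ) : tauk 0 n = if n = 1 then 1 else 0 := by
  rw [tauk_eq_card_finMulAntidiag]
  split_ifs with hn
  · rw [hn, Nat.finMulAntidiag_one, card_singleton]
  · rw [Nat.finMulAntidiag_zero_left hn, card_empty]

theorem tauk_succ (k n : ℕ) : tauk (k + 1) n = ∑ d ∈ n.divisors, tauk k d := by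
  simp only [tauk_eq_card_finMulAntidiag, ← card_sigma]
  refine card_nbij' (fun f => ⟨∏ i : Fin k, f i.succ, Fin.tail f⟩)
    (fun x => Fin.cons (n / x.1) x.2) ?_ ?_ ?_ ?_
  · intro f hf
    simp only [coe_sigma, Set.mem_sigma_iff, mem_coe, Nat.mem_finMulAntidiag,
      Nat.mem_divisors] at hf ⊢
    rw [Fin.prod_univ_succ] at hf
    exact ⟨⟨hf.1 ▸ dvd_mul_left _ _, hf.2⟩, rfl, right_ne_zero_of_mul (hf.1 ▸ hf.2)⟩
  · rintro ⟨d, g⟩ hg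
    simp only [coe_sigma, Set.mem_sigma_iff, mem_coe, Nat.mem_finMulAntidiag, Nat.mem_divisors,
      Fin.prod_univ_succ, Fin.cons_zero, Fin.cons_succ] at hg ⊢
    obtain ⟨⟨hdn, hn⟩, hg, -⟩ := hg
    exact ⟨by rw [hg, Nat.div_mul_cancel hdn], hn⟩
  · intro f hf
    simp only [mem_coe, Nat.mem_finMulAntidiag, Fin.prod_univ_succ] at hf
    have hd : ∏ i : Fin k, f i.succ ≠ 0 := right_ne_zero_of_mul (hf.1 ▸ hf.2)
    simp only [← hf.1, Nat.mul_div_cancel _ (Nat.pos_of_ne_zero hd), Fin.cons_self_tail]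
  · rintro ⟨d, g⟩ hg
    simp only [coe_sigma, Set.mem_sigma_iff, mem_coe, Nat.mem_finMulAntidiag] at hg
    simp [Fin.tail_cons, hg.2.1]

section ZetaPow

open ArithmeticFunction
open scoped ArithmeticFunction.zeta

theorem tauk_eq_zeta_pow (k : ℕ) : tauk k = ⇑(ζ ^ k : ArithmeticFunction ℕ) := by
  induction k with
  | zero => ext n; rw [tauk_zero, pow_zero, one_apply]
  | succ k ih => ext n; rw [tauk_succ, pow_succ, mul_zeta_apply, ih]

theorem tauk_mul {m n : ℕ} (k : ℕ) (h : m.Coprime n) :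
    tauk k (m * n) = tauk k m * tauk k n := by
  rw [tauk_eq_zeta_pow, isMultiplicative_zeta.pow.map_mul_of_coprime h]

theorem tauk_one (k : ℕ) : tauk k 1 = 1 := by
  rw [tauk_eq_zeta_pow, isMultiplicative_zeta.pow.map_one]

end ZetaPow

theorem tauk_zero_prime_pow {p : ℕ} (hp : p.Prime) (n : ℕ) : tauk 0 (p ^ n) = 0 ^ n := by
  simp [tauk_zero, hp.ne_one, zero_pow_eq]

theorem tauk_succ_prime_pow {p : ℕ} (hp : p.Prime) (k n : ℕ) :
    tauk (k + 1) (p ^ n) = ∑ j ∈ range (n + 1), tauk k (p ^ j) := by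
  rw [tauk_succ, Nat.sum_divisors_prime_pow hp]

theorem tauk_succ_prime_pow_eq_choose {p : ℕ} (hp : p.Prime) (k n : ℕ) :
    tauk (k + 1) (p ^ n) = (n + k).choose k := by
  induction k generalizing n with
  | zero => simp [tauk_succ_prime_pow hp, tauk_zero_prime_pow hp]
  | succ k ih =>
    rw [tauk_succ_prime_pow hp, sum_congr rfl fun j _ => ih j, Nat.sum_range_add_choose, add_assoc]

theorem sum_range_pow_le_succ_pow (k n : ℕ) : ∑ j ∈ range (n + 1), k ^ j ≤ (k + 1) ^ n := by
  rw [add_pow]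
  refine sum_le_sum fun j hj => ?_
  have hchoose := Nat.choose_pos (Nat.lt_succ_iff.mp (mem_range.mp hj))
  simpa using Nat.le_mul_of_pos_right _ hchoose

theorem tauk_prime_pow_le {p : ℕ} (hp : p.Prime) (k n : ℕ) : tauk k (p ^ n) ≤ k ^ n := by
  induction k generalizing n with
  | zero => exact (tauk_zero_prime_pow hp n).le
  | succ k ih =>
    rw [tauk_succ_prime_pow hp]
    exact (sum_le_sum fun j _ => ih j).trans (sum_range_pow_le_succ_pow k n)

theorem hasSum_tauk_prime_pow_mul_pow {p : ℕ} (hp : p.Prime) (k : ℕ) {x : ℝ} (hx : |x| < 1) :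
    HasSum (fun n => (tauk k (p ^ n) : ℝ) * x ^ n) ((1 - x)⁻¹ ^ k) := by
  cases k with
  | zero =>
    rw [pow_zero]
    convert hasSum_ite_eq 0 (1 : ℝ) using 2 with n
    cases n <;> simp [tauk_zero_prime_pow hp, tauk_zero]
  | succ k =>
    simpa [tauk_succ_prime_pow_eq_choose hp, inv_pow] using
      hasSum_choose_mul_geometric_of_norm_lt_one k (r := x) hx

theorem inv_one_sub_le_exp_two_mul {t : ℝ} (ht0 : 0 ≤ t) (ht : t ≤ 1 / 2) :
    (1 - t)⁻¹ ≤ exp (2 * t) := by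
  calc (1 - t)⁻¹ ≤ 1 + 2 * t := by
        rw [inv_le_iff_one_le_mul₀ (by linarith)]
        nlinarith
    _ ≤ exp (2 * t) := by linarith [add_one_le_exp (2 * t)]

noncomputable def tauSqRatio (k n : ℕ) : ℝ := tauk k (n ^ 2) / (n : ℝ) ^ 2

theorem tauSqRatio_nonneg (k n : ℕ) : 0 ≤ tauSqRatio k n := by
  unfold tauSqRatio; positivity

theorem tauSqRatio_one (k : ℕ) : tauSqRatio k 1 = 1 := by
  simp [tauSqRatio, tauk_one]

theorem tauSqRatio_mul (k : ℕ) {m n : ℕ} (h : m.Coprime n) :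
    tauSqRatio k (m * n) = tauSqRatio k m * tauSqRatio k n := by
  simp only [tauSqRatio, mul_pow, tauk_mul k (h.pow 2 2), Nat.cast_mul, mul_div_mul_comm]

theorem tauSqRatio_prime_pow (k p e : ℕ) :
    tauSqRatio k (p ^ e) = tauk k (p ^ (2 * e)) * (p : ℝ)⁻¹ ^ (2 * e) := by
  rw [tauSqRatio, inv_pow, ← div_eq_mul_inv]
  push_cast
  ring_nf

section LocalFactor

variable {p : ℕ} (hp : p.Prime) (k : ℕ)
include hp

theorem summable_tauSqRatio_prime_pow_and_tsum_le :
    Summable (fun e => tauSqRatio k (p ^ e)) ∧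
      ∑' e, tauSqRatio k (p ^ e) ≤ (1 - (p : ℝ)⁻¹)⁻¹ ^ k := by
  have hx : |(p : ℝ)⁻¹| < 1 := by
    rw [abs_inv, Nat.abs_cast]; exact inv_lt_one_of_one_lt₀ (mod_cast hp.one_lt)
  have hF := hasSum_tauk_prime_pow_mul_pow hp k hx
  have hinj : Function.Injective (2 * · : ℕ → ℕ) := mul_right_injective₀ two_ne_zero
  have hcomp : (fun e => tauSqRatio k (p ^ e)) =
      (fun b => (tauk k (p ^ b) : ℝ) * (p : ℝ)⁻¹ ^ b) ∘ (2 * ·) :=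
    funext fun e => tauSqRatio_prime_pow k p e
  rw [hcomp, ← hF.tsum_eq]
  exact ⟨hF.summable.comp_injective hinj,
    tsum_comp_le_tsum_of_inj hF.summable (fun b => by positivity) hinj⟩

theorem tsum_tauSqRatio_prime_pow_le_exp_div :
    ∑' e, tauSqRatio k (p ^ e) ≤ exp (2 * k / p) := by
  have hx : (p : ℝ)⁻¹ ≤ 1 / 2 := by
    rw [one_div]; exact inv_anti₀ two_pos (mod_cast hp.two_le)
  calc ∑' e, tauSqRatio k (p ^ e) ≤ (1 - (p : ℝ)⁻¹)⁻¹ ^ k :=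
        (summable_tauSqRatio_prime_pow_and_tsum_le hp k).2
    _ ≤ exp (2 * (p : ℝ)⁻¹) ^ k := by
        gcongr
        · exact inv_nonneg.mpr (by linarith)
        · exact inv_one_sub_le_exp_two_mul (by positivity) hx
    _ = exp (2 * k / p) := by rw [← exp_nat_mul]; ring_nf

theorem tsum_tauSqRatio_prime_pow_le_exp_sq (hkp : 2 * k ≤ p) :
    ∑' e, tauSqRatio k (p ^ e) ≤ exp (2 * (k / p : ℝ) ^ 2) := by
  have hp0 : (0 : ℝ) < p := mod_cast hp.pos
  have ht0 : 0 ≤ (k / p : ℝ) ^ 2 := by positivity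
  have ht : (k / p : ℝ) ^ 2 ≤ 1 / 4 := by
    rw [div_pow, div_le_iff₀ (by positivity)]
    have : (2 * k : ℝ) ≤ p := mod_cast hkp
    nlinarith
  have hgeom := summable_geometric_of_lt_one ht0 (by linarith)
  calc ∑' e, tauSqRatio k (p ^ e) ≤ ∑' e, ((k / p : ℝ) ^ 2) ^ e := by
        refine Summable.tsum_le_tsum (fun e => ?_)
          (summable_tauSqRatio_prime_pow_and_tsum_le hp k).1 hgeom
        rw [tauSqRatio_prime_pow, ← pow_mul, div_eq_mul_inv, mul_pow]
        gcongr
        exact_mod_cast tauk_prime_pow_le hp k _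
    _ = (1 - (k / p : ℝ) ^ 2)⁻¹ := tsum_geometric_of_lt_one ht0 (by linarith)
    _ ≤ exp (2 * (k / p : ℝ) ^ 2) := inv_one_sub_le_exp_two_mul ht0 (by linarith)

end LocalFactor

theorem sum_inv_prime_of_log_two_eq_le {s : Finset ℕ} (hs : ∀ p ∈ s, p.Prime) {j : ℕ}
    (hj : 1 ≤ j) : ∑ p ∈ s with Nat.log 2 p = j, (p : ℝ)⁻¹ ≤ 4 / j := by
  set F := {p ∈ s | Nat.log 2 p = j}
  have hF : ∀ p ∈ F, p.Prime ∧ 2 ^ j ≤ p ∧ p < 2 ^ (j + 1) := by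
    intro p hpF
    obtain ⟨hps, rfl⟩ := mem_filter.mp hpF
    have hp := hs p hps
    exact ⟨hp, Nat.pow_log_le_self 2 hp.ne_zero, Nat.lt_pow_succ_log_self one_lt_two p⟩
  have hlog2 : 0 < log 2 := log_pos one_lt_two
  have hj0 : (0 : ℝ) < j := mod_cast hj
  have hcard : (#F : ℝ) * j ≤ 2 ^ (j + 2) := by
    have hθ : (#F : ℝ) * (j * log 2) ≤ 2 ^ (j + 2) * log 2 := calc
      (#F : ℝ) * (j * log 2) = ∑ _p ∈ F, log ((2 : ℝ) ^ j) := by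
          rw [sum_const, nsmul_eq_mul, log_pow]
      _ ≤ ∑ p ∈ F, log p := sum_le_sum fun p hpF => by
          gcongr; exact_mod_cast (hF p hpF).2.1
      _ ≤ Chebyshev.theta ((2 ^ (j + 1) : ℕ) : ℝ) := by
          rw [Chebyshev.theta_eq_sum_primesLE_log]
          refine sum_le_sum_of_subset_of_nonneg (fun p hpF => ?_) fun p _ _ => ?_
          · exact Nat.mem_primesBelow.mpr ⟨Nat.lt_succ_of_lt (hF p hpF).2.2, (hF p hpF).1⟩
          · exact log_natCast_nonneg p
      _ ≤ log 4 * (2 ^ (j + 1) : ℕ) := Chebyshev.theta_le_log4_mul_x (Nat.cast_nonneg _)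
      _ = 2 ^ (j + 2) * log 2 := by
          rw [show (4 : ℝ) = 2 ^ 2 by norm_num, log_pow]; push_cast; ring
    nlinarith
  calc ∑ p ∈ F, (p : ℝ)⁻¹ ≤ ∑ _p ∈ F, ((2 : ℝ) ^ j)⁻¹ := sum_le_sum fun p hpF => by
        gcongr; exact_mod_cast (hF p hpF).2.1
    _ = #F * ((2 : ℝ) ^ j)⁻¹ := by rw [sum_const, nsmul_eq_mul]
    _ ≤ 2 ^ (j + 2) / j * ((2 : ℝ) ^ j)⁻¹ := by
        gcongr; rwa [le_div_iff₀ hj0]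
    _ = 4 / j := by rw [pow_add]; field_simp; norm_num

theorem sum_primesBelow_inv_le {M : ℕ} (hM : 2 ≤ M) :
    ∑ p ∈ M.primesBelow, (p : ℝ)⁻¹ ≤ 4 * log (log M) + 8 := by
  set J := Nat.log 2 M
  have hJ : 1 ≤ J := Nat.le_log_of_pow_le one_lt_two (by simpa using hM)
  have hmaps : ∀ p ∈ M.primesBelow, Nat.log 2 p ∈ Icc 1 J := fun p hp =>
    mem_Icc.mpr ⟨Nat.le_log_of_pow_le one_lt_two
      (by simpa using (Nat.prime_of_mem_primesBelow hp).two_le),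
      Nat.log_mono_right (Nat.lt_of_mem_primesBelow hp).le⟩
  have hlogM : 0 < log M := log_pos (by exact_mod_cast hM)
  have hJle : (J : ℝ) ≤ 2 * log M := by
    have h : (J : ℝ) * log 2 ≤ log M := by
      rw [← log_pow]
      exact log_le_log (by positivity) (mod_cast Nat.pow_log_le_self 2 (by omega))
    nlinarith [log_two_gt_d9]
  rw [← sum_fiberwise_of_maps_to hmaps]
  calc ∑ j ∈ Icc 1 J, ∑ p ∈ M.primesBelow with Nat.log 2 p = j, (p : ℝ)⁻¹
      ≤ ∑ j ∈ Icc 1 J, 4 / (j : ℝ) := sum_le_sum fun j hj =>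
        sum_inv_prime_of_log_two_eq_le (fun p => Nat.prime_of_mem_primesBelow)
          (mem_Icc.mp hj).1
    _ = 4 * harmonic J := by
        rw [harmonic_eq_sum_Icc]; push_cast; rw [mul_sum]; rfl
    _ ≤ 4 * (1 + log J) := by gcongr; exact harmonic_le_one_add_log J
    _ ≤ 4 * (1 + log (2 * log M)) := by gcongr
    _ ≤ 4 * log (log M) + 8 := by
        rw [log_mul two_ne_zero hlogM.ne']
        linarith [log_two_lt_d9]

theorem sum_le_prod_primesBelow_tsum {f : ℕ → ℝ} (hf0 : ∀ n, 0 ≤ f n) (hf1 : f 1 = 1)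
    (hmul : ∀ {m n : ℕ}, m.Coprime n → f (m * n) = f m * f n)
    (hsum : ∀ {p : ℕ}, p.Prime → Summable fun e => f (p ^ e)) {N : ℕ} {s : Finset ℕ}
    (hs : ∀ n ∈ s, n ∈ N.smoothNumbers) :
    ∑ n ∈ s, f n ≤ ∏ p ∈ N.primesBelow, ∑' e, f (p ^ e) := by
  have hnorm : ∀ {p : ℕ}, p.Prime → Summable fun e => ‖f (p ^ e)‖ := fun hp => by
    simpa only [Real.norm_of_nonneg (hf0 _)] using hsum hp
  have hprod := (EulerProduct.summable_and_hasSum_smoothNumbers_prod_primesBelow_tsum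
    hf1 hmul hnorm N).2
  calc ∑ n ∈ s, f n = ∑ n ∈ s.subtype (· ∈ N.smoothNumbers), f n := by
        rw [sum_subtype_eq_sum_filter, filter_true_of_mem hs]
    _ ≤ _ := sum_le_hasSum _ (fun n _ => hf0 n) hprod

theorem sum_inv_sq_le_of_forall_le {s : Finset ℕ} {m : ℕ} (hm : 1 ≤ m)
    (hs : ∀ i ∈ s, m ≤ i) : ∑ i ∈ s, ((i : ℝ) ^ 2)⁻¹ ≤ 2 / m := by
  calc ∑ i ∈ s, ((i : ℝ) ^ 2)⁻¹
      ≤ ∑ i ∈ Ioo (m - 1) (s.sup id + 1), ((i : ℝ) ^ 2)⁻¹ := by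
        refine sum_le_sum_of_subset_of_nonneg (fun i hi => mem_Ioo.mpr ⟨?_, ?_⟩)
          fun i _ _ => by positivity
        · have := hs i hi; omega
        · exact Nat.lt_succ_of_le (le_sup (f := id) hi)
    _ ≤ 2 / ((m - 1 : ℕ) + 1 : ℝ) := sum_Ioo_inv_sq_le _ _
    _ = 2 / m := by rw [← Nat.cast_add_one, Nat.sub_add_cancel hm]

theorem prod_primesBelow_tsum_tauSqRatio_le {k : ℕ} (hk : 1 ≤ k) (N : ℕ) :
    ∏ p ∈ N.primesBelow, ∑' e, tauSqRatio k (p ^ e)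
      ≤ exp (2 * k * ∑ p ∈ (2 * k).primesBelow, (p : ℝ)⁻¹ + 2 * k) := by
  have hL : ∀ p ∈ N.primesBelow, 0 ≤ ∑' e, tauSqRatio k (p ^ e) := fun p _ =>
    tsum_nonneg fun e => tauSqRatio_nonneg k _
  rw [← prod_filter_mul_prod_filter_not _ (· < 2 * k), exp_add]
  have hsmall : ∏ p ∈ N.primesBelow with p < 2 * k, ∑' e, tauSqRatio k (p ^ e)
      ≤ exp (2 * k * ∑ p ∈ (2 * k).primesBelow, (p : ℝ)⁻¹) := calc
    _ ≤ ∏ p ∈ N.primesBelow with p < 2 * k, exp (2 * k / p) :=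
        prod_le_prod (fun p hp => hL p (mem_filter.mp hp).1) fun p hp =>
          tsum_tauSqRatio_prime_pow_le_exp_div
            (Nat.prime_of_mem_primesBelow (mem_filter.mp hp).1) k
    _ = exp (2 * k * ∑ p ∈ N.primesBelow with p < 2 * k, (p : ℝ)⁻¹) := by
        rw [← exp_sum, mul_sum]; rfl
    _ ≤ _ := by
        gcongr
        intro p hp
        obtain ⟨hpN, hpk⟩ := mem_filter.mp hp
        exact Nat.mem_primesBelow.mpr ⟨hpk, Nat.prime_of_mem_primesBelow hpN⟩
  have hlarge : ∏ p ∈ N.primesBelow with ¬p < 2 * k, ∑' e, tauSqRatio k (p ^ e)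
      ≤ exp (2 * k) := calc
    _ ≤ ∏ p ∈ N.primesBelow with ¬p < 2 * k, exp (2 * (k / p : ℝ) ^ 2) :=
        prod_le_prod (fun p hp => hL p (mem_filter.mp hp).1) fun p hp =>
          tsum_tauSqRatio_prime_pow_le_exp_sq
            (Nat.prime_of_mem_primesBelow (mem_filter.mp hp).1) k
            (not_lt.mp (mem_filter.mp hp).2)
    _ = exp (2 * k ^ 2 * ∑ p ∈ N.primesBelow with ¬p < 2 * k, ((p : ℝ) ^ 2)⁻¹) := by
        rw [← exp_sum, mul_sum]
        exact congrArg exp (sum_congr rfl fun p _ => by ring)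
    _ ≤ exp (2 * k ^ 2 * (2 / (2 * k : ℕ))) := by
        gcongr
        exact sum_inv_sq_le_of_forall_le (by omega) fun p hp => not_lt.mp (mem_filter.mp hp).2
    _ = exp (2 * k) := by
        have : (k : ℝ) ≠ 0 := by positivity
        push_cast; field_simp
  exact mul_le_mul hsmall hlarge (prod_nonneg fun p hp => hL p (mem_filter.mp hp).1)
    (exp_nonneg _)

theorem tsum_tauSqRatio_le_exp {k : ℕ} (hk : 2 ≤ k) :
    ∑' m : ℕ+, tauSqRatio k m ≤ exp (8 * k * log (log (2 * k)) + 18 * k) := by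
  refine tsum_le_of_sum_le' (exp_nonneg _) fun s => ?_
  set N := s.sup (fun m : ℕ+ => (m : ℕ)) + 1
  have hsmooth : ∀ n ∈ s.map ⟨(↑), PNat.coe_injective⟩, n ∈ N.smoothNumbers := by
    intro n hn
    obtain ⟨m, hm, rfl⟩ := mem_map.mp hn
    exact Nat.mem_smoothNumbers_of_lt m.pos
      (Nat.lt_succ_of_le (le_sup (f := fun m : ℕ+ => (m : ℕ)) hm))
  have hmertens := sum_primesBelow_inv_le (M := 2 * k) (by omega)
  push_cast at hmertens
  calc ∑ m ∈ s, tauSqRatio k m = ∑ n ∈ s.map ⟨(↑), PNat.coe_injective⟩, tauSqRatio k n :=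
        by rw [sum_map]; rfl
    _ ≤ ∏ p ∈ N.primesBelow, ∑' e, tauSqRatio k (p ^ e) :=
        sum_le_prod_primesBelow_tsum (tauSqRatio_nonneg k) (tauSqRatio_one k)
          (tauSqRatio_mul k) (fun hp => (summable_tauSqRatio_prime_pow_and_tsum_le hp k).1)
          hsmooth
    _ ≤ exp (2 * k * ∑ p ∈ (2 * k).primesBelow, (p : ℝ)⁻¹ + 2 * k) :=
        prod_primesBelow_tsum_tauSqRatio_le (by omega) N
    _ ≤ exp (8 * k * log (log (2 * k)) + 18 * k) := by
        have := mul_le_mul_of_nonneg_left hmertens (by positivity : (0 : ℝ) ≤ 2 * k)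
        exact exp_le_exp.mpr (by linarith)

theorem exp_le_log_exp_exp_mul_pow {k : ℕ} (hk : 2 ≤ k) :
    exp (8 * k * log (log (2 * k)) + 18 * k) ≤ log (exp (exp 6) * k) ^ (11 * k) := by
  have hk2 : (2 : ℝ) ≤ k := mod_cast hk
  have hlog : log (exp (exp 6) * k) = exp 6 + log k := by
    rw [log_mul (exp_pos _).ne' (by positivity), log_exp]
  have hlogk : 0 ≤ log (k : ℝ) := log_nonneg (by linarith)
  have hpos : 0 < log (exp (exp 6) * k) := by rw [hlog]; positivity
  have hsix : 6 ≤ log (log (exp (exp 6) * k)) := by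
    calc (6 : ℝ) = log (exp 6) := (log_exp 6).symm
      _ ≤ _ := log_le_log (exp_pos _) (by rw [hlog]; linarith)
  have hmono : log (log (2 * k)) ≤ log (log (exp (exp 6) * k)) := by
    refine log_le_log (log_pos (by linarith)) (log_le_log (by positivity) ?_)
    have : (2 : ℝ) ≤ exp (exp 6) := by
      linarith [add_one_le_exp (exp 6), add_one_le_exp (6 : ℝ)]
    nlinarith
  rw [← exp_log hpos, ← exp_nat_mul]
  gcongr
  push_cast
  nlinarith

/-- There is an absolute constant `B > 0` such that for all `k ≥ 2`,
`∑_{m ≥ 1} τ_k(m²)/m² ≤ (log(Bk))^{11k}`. -/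
theorem stmt_9 : ∃ B : ℝ, 0 < B ∧ ∀ k : ℕ, 2 ≤ k →
    ∑' m : ℕ+, (tauk k ((m : ℕ) ^ 2) : ℝ) / (m : ℝ) ^ 2
      ≤ (Real.log (B * k)) ^ (11 * k) :=
  ⟨exp (exp 6), exp_pos _, fun k hk =>
    (tsum_tauSqRatio_le_exp hk).trans (exp_le_log_exp_exp_mul_pow hk)⟩
end
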